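/- arXiv:2010.09126 — 2 statements merged into one kernel-verified Lean document; each statement's English description precedes it below -/
import Mathlib

section
/- Let H be a complex separable infinite-dimensional Hilbert space and let T be a bounded linear operator on H which is not of the form T = λ·I + K for any λ ∈ ℂ and any compact operator K on H. Let C and D be real numbers with 0 < C < diam(W_e(T))/(4√2) and 0 < D < diam(W_e(T))/4. Then for every closed subspace M ⊆ H of finite codimension there exists a unit vector u ∈ M such that |⟨T u, u⟩| ≥ D, ‖T u − ⟨T u, u⟩ u‖ ≥ C, and ‖T* u − ⟨T* u, u⟩ u‖ ≥ C. -/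
/-!
Choose `l, m ∈ W_e(T)` with `|l - m|` close to `diam W_e(T)`. Projecting the orthonormal
sequences that realise `l` and `m` away from the finite-dimensional space `Mᗮ` (and from the
first vector chosen) gives orthonormal `a, b ∈ M` on which the compression of `T` is almost
`diag(l, m)`. For `u = c a + s b` and `v = -s a + c b` with `c² + s² = 1` this gives
`⟪u, T u⟫ ≈ c² l + s² m` and `⟪v, T u⟫ ≈ c s (m - l)`, and the same holds for `T*` with
conjugated entries. Since `v ⊥ u`, the vector `T u - ⟪u, T u⟫ u` has norm at least `|⟪v, T u⟫|`.
Taking `(c, s) = (12/13, 5/13)`, for which both `(c² - s²) / 2` and `c s` exceed `1/4`, and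
ordering `l, m` suitably, all three quantities exceed `diam W_e(T) / 4` up to an arbitrarily
small error.
-/

open scoped InnerProductSpace

/-- The essential numerical range of a bounded operator `T`: the set of `z ∈ ℂ` such that
`⟨T eₙ, eₙ⟩ → z` for some orthonormal sequence `(eₙ)`. Here `⟨x, y⟩` (paper convention,
linear in the first variable) is Mathlib's `⟪y, x⟫_ℂ`. -/
def essNumRange {H : Type*} [NormedAddCommGroup H] [InnerProductSpace ℂ H]
    (T : H →L[ℂ] H) : Set ℂ :=
  {z | ∃ e : ℕ → H, Orthonormal ℂ e ∧
    Filter.Tendsto (fun n => ⟪e n, T (e n)⟫_ℂ) Filter.atTop (nhds z)}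

/-- An orthonormal basis of `H`, viewed as an orthonormal sequence whose closed linear
span is all of `H`. -/
def IsONBasis {H : Type*} [NormedAddCommGroup H] [InnerProductSpace ℂ H] (u : ℕ → H) : Prop :=
  Orthonormal ℂ u ∧ (Submodule.span ℂ (Set.range u)).topologicalClosure = ⊤

open Filter Topology

section General

variable {𝕜 E : Type*} [RCLike 𝕜] [NormedAddCommGroup E] [InnerProductSpace 𝕜 E]

theorem Orthonormal.tendsto_inner_right_zero {e : ℕ → E} (he : Orthonormal 𝕜 e) (v : E) :
    Tendsto (fun n => ⟪v, e n⟫_𝕜) atTop (𝓝 0) := by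
  have h := (he.inner_products_summable v).tendsto_atTop_zero.sqrt
  simp only [Real.sqrt_sq (norm_nonneg _), Real.sqrt_zero] at h
  rw [tendsto_zero_iff_norm_tendsto_zero]
  simpa only [norm_inner_symm] using h

theorem Submodule.tendsto_starProjection_zero {ι : Type*} {l : Filter ι} (U : Submodule 𝕜 E)
    [FiniteDimensional 𝕜 U] {g : ι → E} (hg : ∀ v, Tendsto (fun i => ⟪v, g i⟫_𝕜) l (𝓝 0)) :
    Tendsto (fun i => U.starProjection (g i)) l (𝓝 0) := by
  let b := stdOrthonormalBasis 𝕜 U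
  simp only [b.starProjection_eq_sum_rankOne, FunLike.coe_sum, Finset.sum_apply,
    InnerProductSpace.rankOne_apply]
  simpa using tendsto_finsetSum Finset.univ fun i _ => (hg (b i)).smul_const (b i : E)

theorem norm_inv_norm_smul_sub_le {x f : E} (hf : ‖f‖ = 1) :
    ‖(‖x‖⁻¹ : 𝕜) • x - f‖ ≤ 2 * ‖x - f‖ := by
  rcases eq_or_ne x 0 with rfl | hx
  · simp [hf]
  have hx' : ‖x‖ ≠ 0 := norm_ne_zero_iff.2 hx
  have h : ‖(‖x‖⁻¹ : 𝕜) • x - x‖ = |‖f‖ - ‖x‖| := by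
    rw [show (‖x‖⁻¹ : 𝕜) • x - x = ((‖x‖⁻¹ - 1 : ℝ) : 𝕜) • x by push_cast; rw [sub_smul, one_smul],
      norm_smul, RCLike.norm_ofReal, hf, ← abs_norm x, ← abs_mul, abs_norm, sub_mul,
      inv_mul_cancel₀ hx', one_mul, abs_sub_comm]
  calc ‖(‖x‖⁻¹ : 𝕜) • x - f‖ ≤ ‖(‖x‖⁻¹ : 𝕜) • x - x‖ + ‖x - f‖ :=
        norm_sub_le_norm_sub_add_norm_sub _ _ _
    _ ≤ 2 * ‖x - f‖ := by linarith [abs_norm_sub_norm_le f x, norm_sub_rev f x]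

theorem norm_inner_apply_self_sub_le (T : E →L[𝕜] E) (x y : E) :
    ‖⟪x, T x⟫_𝕜 - ⟪y, T y⟫_𝕜‖ ≤ ‖T‖ * (‖x - y‖ * (‖x - y‖ + 2 * ‖y‖)) := by
  obtain ⟨h, rfl⟩ : ∃ h, x = y + h := ⟨x - y, by abel⟩
  have hbd (p q : E) : ‖⟪p, T q⟫_𝕜‖ ≤ ‖T‖ * (‖p‖ * ‖q‖) :=
    (norm_inner_le_norm _ _).trans (by
      nlinarith [T.le_opNorm q, norm_nonneg p, norm_nonneg q, norm_nonneg (T q)])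
  calc ‖⟪y + h, T (y + h)⟫_𝕜 - ⟪y, T y⟫_𝕜‖ = ‖⟪h, T h⟫_𝕜 + ⟪h, T y⟫_𝕜 + ⟪y, T h⟫_𝕜‖ := by
        simp only [map_add, inner_add_left, inner_add_right]; ring_nf
    _ ≤ ‖T‖ * (‖h‖ * ‖h‖) + ‖T‖ * (‖h‖ * ‖y‖) + ‖T‖ * (‖y‖ * ‖h‖) :=
        norm_add₃_le.trans (by gcongr <;> apply hbd)
    _ = ‖T‖ * (‖y + h - y‖ * (‖y + h - y‖ + 2 * ‖y‖)) := by rw [add_sub_cancel_left]; ring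

theorem tendsto_inner_apply_self_of_tendsto_sub {ι : Type*} {l : Filter ι} (T : E →L[𝕜] E)
    {f g : ι → E} {R : ℝ} {c : 𝕜} (hf : ∀ i, ‖f i‖ ≤ R)
    (hgf : Tendsto (fun i => g i - f i) l (𝓝 0))
    (h : Tendsto (fun i => ⟪f i, T (f i)⟫_𝕜) l (𝓝 c)) :
    Tendsto (fun i => ⟪g i, T (g i)⟫_𝕜) l (𝓝 c) := by
  have hbound : Tendsto (fun i => ‖T‖ * (‖g i - f i‖ * (‖g i - f i‖ + 2 * R))) l (𝓝 0) := by
    simpa using ((hgf.norm.mul (hgf.norm.add_const (2 * R))).const_mul ‖T‖)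
  simpa using (squeeze_zero_norm (fun i => (norm_inner_apply_self_sub_le T (g i) (f i)).trans
    (by gcongr; exact hf i)) hbound).add h

theorem norm_inner_le_norm_sub_smul {u v : E} (hv : ‖v‖ = 1) (hvu : ⟪v, u⟫_𝕜 = 0) (x : E)
    (z : 𝕜) : ‖⟪v, x⟫_𝕜‖ ≤ ‖x - z • u‖ := by
  simpa [inner_sub_right, inner_smul_right, hvu, hv] using norm_inner_le_norm (𝕜 := 𝕜) v (x - z • u)

end General

section EssentialNumericalRange

variable {H : Type*} [NormedAddCommGroup H] [InnerProductSpace ℂ H]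

theorem exists_tendsto_of_mem_essNumRange (T : H →L[ℂ] H) {c : ℂ} (hc : c ∈ essNumRange T)
    (F : Submodule ℂ H) [FiniteDimensional ℂ F] :
    ∃ g : ℕ → H, (∀ n, g n ∈ Fᗮ) ∧ (∀ᶠ n in atTop, ‖g n‖ = 1) ∧
      (∀ v, Tendsto (fun n => ⟪v, g n⟫_ℂ) atTop (𝓝 0)) ∧
      Tendsto (fun n => ⟪g n, T (g n)⟫_ℂ) atTop (𝓝 c) := by
  obtain ⟨f, hf, hfc⟩ := hc
  set q : ℕ → H := fun n => f n - F.starProjection (f n)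
  have hqf : Tendsto (fun n => q n - f n) atTop (𝓝 0) := by
    simpa [q] using (F.tendsto_starProjection_zero hf.tendsto_inner_right_zero).neg
  set g : ℕ → H := fun n => (‖q n‖⁻¹ : ℂ) • q n
  have hgf : Tendsto (fun n => g n - f n) atTop (𝓝 0) :=
    squeeze_zero_norm (fun n => norm_inv_norm_smul_sub_le (hf.1 n))
      (by simpa using hqf.norm.const_mul 2)
  refine ⟨g, fun n => Fᗮ.smul_mem _ (F.sub_starProjection_mem_orthogonal _), ?_, fun v => ?_,
    tendsto_inner_apply_self_of_tendsto_sub T (fun n => (hf.1 n).le) hgf hfc⟩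
  · filter_upwards [hqf.norm.eventually (gt_mem_nhds (by simp : ‖(0 : H)‖ < 1))] with n hn
    refine norm_smul_inv_norm fun hq => ?_
    simp [hq, hf.1 n] at hn
  · have h := (hf.tendsto_inner_right_zero v).add (((innerSL ℂ v).continuous.tendsto 0).comp hgf)
    simpa [Function.comp_def, inner_sub_right] using h

theorem exists_unit_mem_near_of_mem_essNumRange [CompleteSpace H] (T : H →L[ℂ] H)
    {M : Submodule ℂ H} (hMc : IsClosed (M : Set H)) [FiniteDimensional ℂ Mᗮ] {c : ℂ}
    (hc : c ∈ essNumRange T) (a : H) {ε : ℝ} (hε : 0 < ε) :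
    ∃ b ∈ M, ‖b‖ = 1 ∧ ⟪a, b⟫_ℂ = 0 ∧ ‖⟪b, T b⟫_ℂ - c‖ ≤ ε ∧ ‖⟪a, T b⟫_ℂ‖ ≤ ε ∧
      ‖⟪b, T a⟫_ℂ‖ ≤ ε := by
  have : CompleteSpace M := hMc.completeSpace_coe
  obtain ⟨g, hgF, hg1, hg0, hgc⟩ := exists_tendsto_of_mem_essNumRange T hc (Mᗮ ⊔ ℂ ∙ a)
  have hgM (n : ℕ) : g n ∈ M := by
    simpa [Submodule.orthogonal_orthogonal] using Submodule.orthogonal_le le_sup_left (hgF n)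
  have hga (n : ℕ) : ⟪a, g n⟫_ℂ = 0 :=
    Submodule.mem_orthogonal_singleton_iff_inner_right.1
      (Submodule.orthogonal_le le_sup_right (hgF n))
  have hnear {u : ℕ → ℂ} {z : ℂ} (hu : Tendsto u atTop (𝓝 z)) : ∀ᶠ n in atTop, ‖u n - z‖ ≤ ε :=
    (hu.sub_const z).norm.eventually (ge_mem_nhds (by simpa using hε))
  obtain ⟨n, hn1, hnc, hn2, hn3⟩ :=
    (hg1.and ((hnear hgc).and ((hnear (hg0 (ContinuousLinearMap.adjoint T a))).and
      (hnear (hg0 (T a)))))).exists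
  refine ⟨g n, hgM n, hn1, hga n, hnc, ?_, ?_⟩
  · simpa [ContinuousLinearMap.adjoint_inner_left] using hn2
  · simpa [norm_inner_symm] using hn3

structure IsAlmostDiagonal (T : H →L[ℂ] H) (a b : H) (l m : ℂ) (ε : ℝ) : Prop where
  fst : ‖⟪a, T a⟫_ℂ - l‖ ≤ ε
  snd : ‖⟪b, T b⟫_ℂ - m‖ ≤ ε
  fst_snd : ‖⟪a, T b⟫_ℂ‖ ≤ ε
  snd_fst : ‖⟪b, T a⟫_ℂ‖ ≤ ε

theorem exists_isAlmostDiagonal_of_mem_essNumRange [CompleteSpace H] (T : H →L[ℂ] H)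
    {M : Submodule ℂ H} (hMc : IsClosed (M : Set H)) [FiniteDimensional ℂ Mᗮ] {l m : ℂ}
    (hl : l ∈ essNumRange T) (hm : m ∈ essNumRange T) {ε : ℝ} (hε : 0 < ε) :
    ∃ a ∈ M, ∃ b ∈ M, ‖a‖ = 1 ∧ ‖b‖ = 1 ∧ ⟪a, b⟫_ℂ = 0 ∧ IsAlmostDiagonal T a b l m ε := by
  obtain ⟨a, haM, ha, -, hal, -, -⟩ := exists_unit_mem_near_of_mem_essNumRange T hMc hl 0 hε
  obtain ⟨b, hbM, hb, hab, hbm, habT, hbaT⟩ :=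
    exists_unit_mem_near_of_mem_essNumRange T hMc hm a hε
  exact ⟨a, haM, b, hbM, ha, hb, hab, hal, hbm, habT, hbaT⟩

theorem IsAlmostDiagonal.adjoint [CompleteSpace H] {T : H →L[ℂ] H} {a b : H} {l m : ℂ} {ε : ℝ}
    (h : IsAlmostDiagonal T a b l m ε) :
    IsAlmostDiagonal (ContinuousLinearMap.adjoint T) a b (starRingEnd ℂ l) (starRingEnd ℂ m) ε
    where
  fst := by
    rw [ContinuousLinearMap.adjoint_inner_right, ← inner_conj_symm, ← map_sub, Complex.norm_conj]
    exact h.fst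
  snd := by
    rw [ContinuousLinearMap.adjoint_inner_right, ← inner_conj_symm, ← map_sub, Complex.norm_conj]
    exact h.snd
  fst_snd := by simpa [ContinuousLinearMap.adjoint_inner_right, norm_inner_symm] using h.snd_fst
  snd_fst := by simpa [ContinuousLinearMap.adjoint_inner_right, norm_inner_symm] using h.fst_snd

end EssentialNumericalRange

section Rotation

variable {H : Type*} [NormedAddCommGroup H] [InnerProductSpace ℂ H]

def realComb (a b : H) (x y : ℝ) : H := (x : ℂ) • a + (y : ℂ) • b

theorem map_realComb (T : H →L[ℂ] H) (a b : H) (x y : ℝ) :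
    T (realComb a b x y) = realComb (T a) (T b) x y := by
  simp [realComb]

theorem inner_realComb_realComb (a b a' b' : H) (x y x' y' : ℝ) :
    ⟪realComb a b x y, realComb a' b' x' y'⟫_ℂ =
      x * x' * ⟪a, a'⟫_ℂ + x * y' * ⟪a, b'⟫_ℂ + y * x' * ⟪b, a'⟫_ℂ + y * y' * ⟪b, b'⟫_ℂ := by
  simp only [realComb, inner_add_left, inner_add_right, inner_smul_left, inner_smul_right,
    Complex.conj_ofReal]
  ring

variable {a b : H} {c s : ℝ}

theorem norm_realComb (ha : ‖a‖ = 1) (hb : ‖b‖ = 1) (hab : ⟪a, b⟫_ℂ = 0)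
    (hcs : c ^ 2 + s ^ 2 = 1) : ‖realComb a b c s‖ = 1 := by
  have h := inner_realComb_realComb a b a b c s c s
  rw [inner_self_eq_norm_sq_to_K, inner_self_eq_norm_sq_to_K, inner_self_eq_norm_sq_to_K,
    inner_eq_zero_symm.1 hab, hab, ha, hb] at h
  refine (pow_eq_one_iff_of_nonneg (norm_nonneg _) two_ne_zero).1 (Complex.ofReal_injective ?_)
  have hcs' : (c : ℂ) ^ 2 + (s : ℂ) ^ 2 = 1 := by exact_mod_cast hcs
  push_cast at h ⊢
  linear_combination h + hcs'

theorem inner_realComb_neg_eq_zero (ha : ‖a‖ = 1) (hb : ‖b‖ = 1) (hab : ⟪a, b⟫_ℂ = 0) :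
    ⟪realComb a b (-s) c, realComb a b c s⟫_ℂ = 0 := by
  rw [inner_realComb_realComb, inner_self_eq_norm_sq_to_K, inner_self_eq_norm_sq_to_K,
    inner_eq_zero_symm.1 hab, hab, ha, hb]
  push_cast
  ring

theorem norm_ofReal_mul_le {r ε : ℝ} {z : ℂ} (hz : ‖z‖ ≤ ε) : ‖(r : ℂ) * z‖ ≤ |r| * ε := by
  rw [norm_mul, Complex.norm_real, Real.norm_eq_abs]
  gcongr

theorem two_mul_abs_mul_le_one (hcs : c ^ 2 + s ^ 2 = 1) : 2 * |c * s| ≤ 1 := by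
  rw [abs_mul, ← hcs, ← sq_abs c, ← sq_abs s]
  nlinarith [sq_nonneg (|c| - |s|)]

variable {T : H →L[ℂ] H} {l m : ℂ} {ε : ℝ}

theorem IsAlmostDiagonal.norm_inner_realComb_self_sub_le (h : IsAlmostDiagonal T a b l m ε)
    (hcs : c ^ 2 + s ^ 2 = 1) :
    ‖⟪realComb a b c s, T (realComb a b c s)⟫_ℂ - ((c ^ 2 : ℝ) * l + (s ^ 2 : ℝ) * m)‖ ≤
      2 * ε := by
  have hcs2 := two_mul_abs_mul_le_one hcs
  calc _ = ‖(c ^ 2 : ℝ) * (⟪a, T a⟫_ℂ - l) + (c * s : ℝ) * (⟪a, T b⟫_ℂ + ⟪b, T a⟫_ℂ)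
          + (s ^ 2 : ℝ) * (⟪b, T b⟫_ℂ - m)‖ := by
        rw [map_realComb, inner_realComb_realComb]; push_cast; ring_nf
    _ ≤ |c ^ 2| * ε + |c * s| * (2 * ε) + |s ^ 2| * ε :=
        norm_add₃_le.trans (add_le_add_three (norm_ofReal_mul_le h.fst)
          (norm_ofReal_mul_le ((norm_add_le _ _).trans (by linarith [h.fst_snd, h.snd_fst])))
          (norm_ofReal_mul_le h.snd))
    _ ≤ 2 * ε := by
        rw [abs_sq, abs_sq]; nlinarith [h.fst_snd, norm_nonneg ⟪a, T b⟫_ℂ]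

theorem IsAlmostDiagonal.norm_inner_realComb_sub_le (h : IsAlmostDiagonal T a b l m ε)
    (hcs : c ^ 2 + s ^ 2 = 1) :
    ‖⟪realComb a b (-s) c, T (realComb a b c s)⟫_ℂ - (c * s : ℝ) * (m - l)‖ ≤ 2 * ε := by
  have hcs2 := two_mul_abs_mul_le_one hcs
  calc _ = ‖(c * s : ℝ) * ((⟪b, T b⟫_ℂ - m) - (⟪a, T a⟫_ℂ - l)) + (c ^ 2 : ℝ) * ⟪b, T a⟫_ℂ
          - (s ^ 2 : ℝ) * ⟪a, T b⟫_ℂ‖ := by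
        rw [map_realComb, inner_realComb_realComb]; push_cast; ring_nf
    _ ≤ |c * s| * (2 * ε) + |c ^ 2| * ε + |s ^ 2| * ε :=
        (norm_sub_le _ _).trans (add_le_add ((norm_add_le _ _).trans (add_le_add
          (norm_ofReal_mul_le ((norm_sub_le _ _).trans (by linarith [h.fst, h.snd])))
          (norm_ofReal_mul_le h.snd_fst))) (norm_ofReal_mul_le h.fst_snd))
    _ ≤ 2 * ε := by
        rw [abs_sq, abs_sq]; nlinarith [h.fst_snd, norm_nonneg ⟪a, T b⟫_ℂ]

theorem exists_unit_mem_lower_bounds_of_mem_essNumRange [CompleteSpace H] (T : H →L[ℂ] H)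
    {M : Submodule ℂ H} (hMc : IsClosed (M : Set H)) [FiniteDimensional ℂ Mᗮ] {l m : ℂ}
    (hl : l ∈ essNumRange T) (hm : m ∈ essNumRange T) {ε : ℝ} (hε : 0 < ε) {c s : ℝ}
    (hcs : c ^ 2 + s ^ 2 = 1) :
    ∃ u ∈ M, ‖u‖ = 1 ∧
      ‖(c ^ 2 : ℝ) * l + (s ^ 2 : ℝ) * m‖ - 2 * ε ≤ ‖⟪u, T u⟫_ℂ‖ ∧
      |c * s| * ‖m - l‖ - 2 * ε ≤ ‖T u - ⟪u, T u⟫_ℂ • u‖ ∧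
      |c * s| * ‖m - l‖ - 2 * ε ≤
        ‖ContinuousLinearMap.adjoint T u - ⟪u, ContinuousLinearMap.adjoint T u⟫_ℂ • u‖ := by
  obtain ⟨a, haM, b, hbM, ha, hb, hab, hT⟩ :=
    exists_isAlmostDiagonal_of_mem_essNumRange T hMc hl hm hε
  set u := realComb a b c s
  set v := realComb a b (-s) c
  have hv : ‖v‖ = 1 := norm_realComb ha hb hab (by linarith)
  have hvu : ⟪v, u⟫_ℂ = 0 := inner_realComb_neg_eq_zero ha hb hab
  have hoff {S : H →L[ℂ] H} {l' m' : ℂ} (hS : IsAlmostDiagonal S a b l' m' ε) :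
      |c * s| * ‖m' - l'‖ - 2 * ε ≤ ‖S u - ⟪u, S u⟫_ℂ • u‖ := by
    calc _ ≤ ‖⟪v, S u⟫_ℂ‖ := by
          have := norm_le_insert ⟪v, S u⟫_ℂ ((c * s : ℝ) * (m' - l'))
          rw [norm_mul, Complex.norm_real, Real.norm_eq_abs] at this
          linarith [hS.norm_inner_realComb_sub_le hcs]
      _ ≤ _ := norm_inner_le_norm_sub_smul hv hvu _ _
  refine ⟨u, M.add_mem (M.smul_mem _ haM) (M.smul_mem _ hbM), norm_realComb ha hb hab hcs, ?_,
    hoff hT, ?_⟩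
  · linarith [norm_le_insert ⟪u, T u⟫_ℂ ((c ^ 2 : ℝ) * l + (s ^ 2 : ℝ) * m),
      hT.norm_inner_realComb_self_sub_le hcs]
  · simpa only [← map_sub, Complex.norm_conj] using hoff hT.adjoint

end Rotation

theorem exists_mem_lt_norm_sub_le_norm_add (S : Set ℂ) {r : ℝ} (hr0 : 0 ≤ r)
    (hr : r < Metric.diam S) (p q : ℝ) :
    ∃ l ∈ S, ∃ m ∈ S, r < ‖l - m‖ ∧ |p - q| / 2 * ‖l - m‖ ≤ ‖(p : ℂ) * l + (q : ℂ) * m‖ := by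
  obtain ⟨l, hl, m, hm, hlm⟩ : ∃ l ∈ S, ∃ m ∈ S, r < dist l m := by
    by_contra! h
    exact hr.not_ge (Metric.diam_le_of_forall_dist_le hr0 h)
  rw [dist_eq_norm] at hlm
  have hsum : |p - q| * ‖l - m‖ ≤ ‖(p : ℂ) * l + (q : ℂ) * m‖ + ‖(p : ℂ) * m + (q : ℂ) * l‖ := by
    calc |p - q| * ‖l - m‖ = ‖((p : ℂ) * l + (q : ℂ) * m) - ((p : ℂ) * m + (q : ℂ) * l)‖ := by
          rw [← Real.norm_eq_abs, ← Complex.norm_real, ← norm_mul]; push_cast; ring_nf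
      _ ≤ _ := norm_sub_le _ _
  rcases le_total ‖(p : ℂ) * m + (q : ℂ) * l‖ ‖(p : ℂ) * l + (q : ℂ) * m‖ with h | h
  · exact ⟨l, hl, m, hm, hlm, by linarith⟩
  · exact ⟨m, hm, l, hl, by rwa [norm_sub_rev], by rw [norm_sub_rev]; linarith⟩

theorem stmt9_general {H : Type*} [NormedAddCommGroup H] [InnerProductSpace ℂ H] [CompleteSpace H]
    (T : H →L[ℂ] H)
    (C D : ℝ) (hC : C < Metric.diam (essNumRange T) / (4 * Real.sqrt 2))
    (hD0 : 0 < D) (hD : D < Metric.diam (essNumRange T) / 4)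
    (M : Submodule ℂ H) (hMc : IsClosed (M : Set H)) (hMf : FiniteDimensional ℂ ↥Mᗮ) :
    ∃ u : H, u ∈ M ∧ ‖u‖ = 1 ∧
      D ≤ ‖⟪u, T u⟫_ℂ‖ ∧
      C ≤ ‖T u - ⟪u, T u⟫_ℂ • u‖ ∧
      C ≤ ‖ContinuousLinearMap.adjoint T u - ⟪u, ContinuousLinearMap.adjoint T u⟫_ℂ • u‖ := by
  set d := Metric.diam (essNumRange T)
  have hd : 0 ≤ d := Metric.diam_nonneg
  have hCd : C < d / 4 := hC.trans_le (div_le_div_of_nonneg_left hd (by norm_num)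
    (by nlinarith [Real.one_le_sqrt.2 (by norm_num : (1 : ℝ) ≤ 2)]))
  obtain ⟨ε, hε, hεC, hεD⟩ : ∃ ε > 0, 3 * ε ≤ d / 4 - C ∧ 3 * ε ≤ d / 4 - D :=
    ⟨min (d / 4 - C) (d / 4 - D) / 3, by positivity,
      by linarith [min_le_left (d / 4 - C) (d / 4 - D)],
      by linarith [min_le_right (d / 4 - C) (d / 4 - D)]⟩
  obtain ⟨l, hl, m, hm, hlm, hord⟩ := exists_mem_lt_norm_sub_le_norm_add (essNumRange T)
    (r := d - ε) (by linarith) (by linarith) ((12 / 13) ^ 2) ((5 / 13) ^ 2)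
  obtain ⟨u, huM, hu, hdiag, hoff, hoff'⟩ :=
    exists_unit_mem_lower_bounds_of_mem_essNumRange T hMc hl hm hε (c := 12 / 13) (s := 5 / 13)
      (by norm_num)
  rw [norm_sub_rev] at hoff hoff'
  norm_num at hord hdiag hoff hoff'
  exact ⟨u, huM, hu, by linarith, by linarith, by linarith⟩

theorem stmt9 {H : Type*} [NormedAddCommGroup H] [InnerProductSpace ℂ H] [CompleteSpace H]
    [TopologicalSpace.SeparableSpace H] (hinf : ¬ FiniteDimensional ℂ H)
    (T : H →L[ℂ] H)
    (hT : ¬ ∃ (lam : ℂ) (K : H →L[ℂ] H), IsCompactOperator K ∧ T = lam • (1 : H →L[ℂ] H) + K)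
    (C D : ℝ) (hC0 : 0 < C) (hC : C < Metric.diam (essNumRange T) / (4 * Real.sqrt 2))
    (hD0 : 0 < D) (hD : D < Metric.diam (essNumRange T) / 4)
    (M : Submodule ℂ H) (hMc : IsClosed (M : Set H)) (hMf : FiniteDimensional ℂ ↥Mᗮ) :
    ∃ u : H, u ∈ M ∧ ‖u‖ = 1 ∧
      D ≤ ‖⟪u, T u⟫_ℂ‖ ∧
      C ≤ ‖T u - ⟪u, T u⟫_ℂ • u‖ ∧
      C ≤ ‖ContinuousLinearMap.adjoint T u - ⟪u, ContinuousLinearMap.adjoint T u⟫_ℂ • u‖ :=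
  stmt9_general T C D hC hD0 hD M hMc hMf
end

section
/- Let H be a complex separable infinite-dimensional Hilbert space and let T be a bounded selfadjoint linear operator on H, so that W_e(T) ⊆ ℝ. Let (λ_n)_{n=1}^∞ be a sequence of real numbers lying in the interior, relative to ℝ, of the set W_{e,ℝ}(T) = {t ∈ ℝ : t ∈ W_e(T)}, and suppose ∑_{n=1}^∞ dist(λ_n, ∂_ℝ W_{e,ℝ}(T)) = ∞, where ∂_ℝ denotes the boundary in ℝ. Then for every K ∈ ℕ there exists an orthonormal basis (u_n)_{n=1}^∞ of H such that ⟨T u_n, u_n⟩ = λ_n for all n ∈ ℕ, and ⟨T u_n, u_j⟩ = 0 whenever 1 ≤ |n − j| ≤ K. -/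
open scoped InnerProductSpace

/-!
The basis is built one vector at a time. Every point of `W_e(T)` is approximately the diagonal
value `⟪v, T v⟫` of unit vectors `v` orthogonal to any given finite-dimensional subspace `U`, so
by the intermediate value theorem every real point between two such points is exactly one. Hence,
if `λₙ ± ρ ∈ W_e(T)`, the `n`-th vector can have diagonal value `λₙ`, lie in `Uᗮ` for `U` spanned
by the earlier vectors and by `T` of the `K` previous ones (this gives the band), and still have
any prescribed component `t` along a given unit vector `w ∈ Uᗮ`, as long as `t² ≲ ρ / ‖T‖`.

For completeness, at capture steps the new vector takes the component `tₙ` along the normalised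
residual `g` of a vector `f` of a dense sequence, so that `|⟪uₙ, f⟫| = tₙ ‖g‖`; Bessel's inequality
then forces `‖g‖ → 0`, because `∑ tₙ²`, comparable to `∑ ρₙ`, diverges along the capture steps
of `f`. For `g / ‖g‖` to lie in `Uᗮ`, the `K` steps before a capture step keep `T g` orthogonal to
their vectors, so capture steps are taken from one residue class modulo `K + 1` along which
`∑ ρₙ` still diverges, and that series is split into infinitely many divergent pieces, one for
each `f`.
-/

open Filter Topology

lemma exists_not_summable_residue {a : ℕ → ℝ} (ha : 0 ≤ a) (h : ¬ Summable a) (N : ℕ)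
    [NeZero N] : ∃ r < N, ¬ Summable (fun q => a (r + N * q)) := by
  by_contra! hr
  apply h
  rw [← (Nat.residueClassesEquiv N).symm.summable_iff]
  exact (summable_prod_of_nonneg (fun _ => ha _)).2
    ⟨fun j => hr j.val (ZMod.val_lt j), Summable.of_finite⟩

lemma exists_disjoint_blocks {a : ℕ → ℝ} (ha : 0 ≤ a) (h : ¬ Summable a) :
    ∃ F : ℕ → Finset ℕ, (∀ m, 1 ≤ ∑ i ∈ F m, a i) ∧ Pairwise fun m m' => Disjoint (F m) (F m') := by
  refine exists_seq_of_forall_finset_exists' (fun F => 1 ≤ ∑ i ∈ F, a i) Disjoint fun s _ => ?_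
  set N := (s.biUnion id).sup id + 1
  have hpartial := (not_summable_iff_tendsto_nat_atTop_of_nonneg ha).1 h
  obtain ⟨M, hM, hNM⟩ := ((hpartial.eventually_ge_atTop (∑ i ∈ Finset.range N, a i + 1)).and
    (eventually_ge_atTop N)).exists
  refine ⟨Finset.Ico N M, by rw [Finset.sum_Ico_eq_sub _ hNM]; linarith, fun G hG => ?_⟩
  refine Finset.disjoint_left.2 fun x hx hxN => ?_
  have : x ≤ (s.biUnion id).sup id := Finset.le_sup (f := id) (Finset.mem_biUnion.2 ⟨G, hG, hx⟩)
  have := (Finset.mem_Ico.1 hxN).1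
  omega

lemma exists_fibers_not_summable {a : ℕ → ℝ} (ha : 0 ≤ a) (h : ¬ Summable a) :
    ∃ κ : ℕ → ℕ, ∀ k, ¬ Summable ((κ ⁻¹' {k}).indicator a) := by
  classical
  obtain ⟨F, hF, hdisj⟩ := exists_disjoint_blocks ha h
  set κ : ℕ → ℕ := fun q => if hq : ∃ m, q ∈ F m then (Nat.unpair hq.choose).1 else 0
  have hκ {q m : ℕ} (hq : q ∈ F m) : κ q = (Nat.unpair m).1 := by
    have hex : ∃ m, q ∈ F m := ⟨m, hq⟩
    have hm : hex.choose = m := by_contra fun hne =>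
      Finset.disjoint_left.1 (hdisj hne) hex.choose_spec hq
    simp only [κ, dif_pos hex, hm]
  refine ⟨κ, fun k hsum => ?_⟩
  set g := (κ ⁻¹' {k}).indicator a
  obtain ⟨I, hI⟩ := exists_nat_gt (∑' q, g q)
  have hblock (i : ℕ) : ∑ q ∈ F (Nat.pair k i), a q = ∑ q ∈ F (Nat.pair k i), g q :=
    Finset.sum_congr rfl fun q hq => by simp [g, hκ hq]
  have hpair : (↑(Finset.range I) : Set ℕ).PairwiseDisjoint fun i => F (Nat.pair k i) :=
    fun i _ j _ hij => hdisj fun h => hij (Nat.pair_eq_pair.1 h).2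
  have hg (q : ℕ) : 0 ≤ g q := Set.indicator_nonneg (fun q _ => ha q) q
  refine hI.not_ge ?_
  calc (I : ℝ) = ∑ i ∈ Finset.range I, 1 := by simp
    _ ≤ ∑ i ∈ Finset.range I, ∑ q ∈ F (Nat.pair k i), g q :=
      Finset.sum_le_sum fun i _ => (hF _).trans_eq (hblock i)
    _ = ∑ q ∈ (Finset.range I).biUnion fun i => F (Nat.pair k i), g q :=
      (Finset.sum_biUnion hpair).symm
    _ ≤ ∑' q, g q := hsum.sum_le_tsum _ fun q _ => hg q

/-- Which steps of the construction are capture steps, and which vector of the dense sequence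
each step works on. -/
structure BandSchedule (K : ℕ) where
  capture : Set ℕ
  key : ℕ → ℕ
  window : ∀ n ∈ capture, ∀ j < n, n ≤ j + K → j ∉ capture ∧ key j = key n

lemma BandSchedule.exists_not_summable {τ : ℕ → ℝ} (hτ : 0 ≤ τ) (h : ¬ Summable τ) (K : ℕ) :
    ∃ σ : BandSchedule K, ∀ k, ¬ Summable ((σ.capture ∩ σ.key ⁻¹' {k}).indicator τ) := by
  obtain ⟨r, hr, hτr⟩ := exists_not_summable_residue hτ h (K + 1)
  obtain ⟨κ, hκ⟩ := exists_fibers_not_summable (a := fun q => τ (r + (K + 1) * q))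
    (fun q => hτ (r + (K + 1) * q)) hτr
  -- `n` lies in the period `q = (n + (K - r)) / (K + 1)`, and the last step of each period,
  -- `n = r + (K + 1) * q`, is its capture step
  have hperiod {q i : ℕ} (hi : i < K + 1) :
      ((K + 1) * q + i) % (K + 1) = i ∧ ((K + 1) * q + i) / (K + 1) = q := by
    rw [Nat.mul_add_mod_self_left, Nat.mod_eq_of_lt hi, Nat.mul_add_div (Nat.succ_pos K),
      Nat.div_eq_of_lt hi, add_zero]
    exact ⟨rfl, rfl⟩
  refine ⟨⟨{n | (n + (K - r)) % (K + 1) = K}, fun n => κ ((n + (K - r)) / (K + 1)), ?_⟩,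
    fun k hsum => hκ k ?_⟩
  · intro n hn j hjn hnj
    obtain ⟨q, hq⟩ : ∃ q, n + (K - r) = (K + 1) * q + K :=
      ⟨_, by conv_lhs => rw [← Nat.div_add_mod (n + (K - r)) (K + 1), hn.out]⟩
    have hj : j + (K - r) = (K + 1) * q + (j + K - n) := by omega
    have hi : j + K - n < K + 1 := by omega
    simp only [Set.mem_ofPred_eq, hj, hq, (hperiod hi).1, (hperiod hi).2,
      (hperiod (Nat.lt_succ_self K)).2, and_true]
    omega
  · have hφ : Function.Injective fun q => r + (K + 1) * q := fun q q' h => by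
      simpa using h
    refine (hsum.comp_injective hφ).congr fun q => ?_
    have hq : r + (K + 1) * q + (K - r) = (K + 1) * q + K := by omega
    simp [Set.indicator, hq, (hperiod (Nat.lt_succ_self K)).1, (hperiod (Nat.lt_succ_self K)).2]

lemma not_summable_min_div {a : ℕ → ℝ} (ha : 0 ≤ a) (h : ¬ Summable a) {c b : ℝ} (hc : 0 < c)
    (hb : 0 < b) : ¬ Summable fun n => min (a n / c) b := fun hs => by
  refine h ((hs.mul_left c).of_norm_bounded_eventually ?_)
  filter_upwards [hs.tendsto_cofinite_zero.eventually (gt_mem_nhds hb)] with n hn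
  have hn' : a n / c < b := (min_lt_iff.1 hn).resolve_right (lt_irrefl b)
  rw [Real.norm_of_nonneg (ha n), min_eq_left hn'.le, mul_div_cancel₀ _ hc.ne']

noncomputable def seqOfNext {α : Type*} [Nonempty α] (P : (ℕ → α) → ℕ → α → Prop) : ℕ → α
  | n => Classical.epsilon
      (P (fun m => if _ : m < n then seqOfNext P m else Classical.arbitrary α) n)

lemma exists_seq_of_forall_exists_next {α : Type*} [Nonempty α] (P : (ℕ → α) → ℕ → α → Prop)
    (hP : ∀ p q n x, (∀ m < n, p m = q m) → P p n x → P q n x)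
    (h : ∀ p n, (∀ m < n, P p m (p m)) → ∃ x, P p n x) : ∃ u : ℕ → α, ∀ n, P u n (u n) := by
  refine ⟨seqOfNext P, fun n => ?_⟩
  induction n using Nat.strong_induction_on with
  | _ n ih =>
    have hpre : ∀ m < n, seqOfNext P m =
        if _ : m < n then seqOfNext P m else Classical.arbitrary α := fun m hm => by simp [hm]
    obtain ⟨x, hx⟩ := h _ n ih
    have hspec := Classical.epsilon_spec ⟨x, hP _ _ n x hpre hx⟩
    rw [← seqOfNext] at hspec
    exact hP _ _ n _ (fun m hm => (hpre m hm).symm) hspec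

section InnerMapSelf

variable {H : Type*} [NormedAddCommGroup H] [InnerProductSpace ℂ H]

lemma norm_inner_map_self_sub_le (T : H →L[ℂ] H) (x y : H) :
    ‖⟪x, T x⟫_ℂ - ⟪y, T y⟫_ℂ‖ ≤ ‖T‖ * (‖x‖ + ‖y‖) * ‖x - y‖ := by
  have h : ⟪x, T x⟫_ℂ - ⟪y, T y⟫_ℂ = ⟪x - y, T x⟫_ℂ + ⟪y, T (x - y)⟫_ℂ := by
    simp only [inner_sub_left, map_sub, inner_sub_right]; ring
  calc ‖⟪x, T x⟫_ℂ - ⟪y, T y⟫_ℂ‖ ≤ ‖x - y‖ * ‖T x‖ + ‖y‖ * ‖T (x - y)‖ := by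
        rw [h]
        exact (norm_add_le _ _).trans (add_le_add (norm_inner_le_norm _ _) (norm_inner_le_norm _ _))
    _ ≤ ‖x - y‖ * (‖T‖ * ‖x‖) + ‖y‖ * (‖T‖ * ‖x - y‖) := by
        gcongr <;> exact T.le_opNorm _
    _ = ‖T‖ * (‖x‖ + ‖y‖) * ‖x - y‖ := by ring

lemma inner_map_self_smul (T : H →L[ℂ] H) (c : ℂ) (x : H) :
    ⟪c • x, T (c • x)⟫_ℂ = (‖c‖ ^ 2 : ℝ) * ⟪x, T x⟫_ℂ := by
  rw [map_smul, inner_smul_left, inner_smul_right, ← mul_assoc, RCLike.conj_mul]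
  norm_cast

lemma norm_inner_map_self_le (T : H →L[ℂ] H) {x : H} (hx : ‖x‖ = 1) : ‖⟪x, T x⟫_ℂ‖ ≤ ‖T‖ :=
  calc ‖⟪x, T x⟫_ℂ‖ ≤ ‖x‖ * (‖T‖ * ‖x‖) :=
        (norm_inner_le_norm _ _).trans (by gcongr; exact T.le_opNorm _)
    _ = ‖T‖ := by rw [hx]; ring

lemma norm_le_of_mem_essNumRange {T : H →L[ℂ] H} {z : ℂ} (hz : z ∈ essNumRange T) :
    ‖z‖ ≤ ‖T‖ := by
  obtain ⟨e, he, hlim⟩ := hz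
  exact le_of_tendsto hlim.norm (Eventually.of_forall fun n => norm_inner_map_self_le T (he.1 n))

lemma Orthonormal.tendsto_inner_right {e : ℕ → H} (he : Orthonormal ℂ e) (x : H) :
    Tendsto (fun n => ⟪x, e n⟫_ℂ) atTop (𝓝 0) := by
  have hsq : Tendsto (fun n => ‖⟪e n, x⟫_ℂ‖ ^ 2) atTop (𝓝 0) :=
    (he.inner_products_summable x).tendsto_atTop_zero
  have hnorm := (Real.continuous_sqrt.tendsto 0).comp hsq
  simp only [Function.comp_def, Real.sqrt_sq (norm_nonneg _), Real.sqrt_zero] at hnorm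
  rw [tendsto_zero_iff_norm_tendsto_zero]
  simpa only [norm_inner_symm] using hnorm

lemma Orthonormal.tendsto_starProjection {e : ℕ → H} (he : Orthonormal ℂ e)
    (U : Submodule ℂ H) [FiniteDimensional ℂ U] :
    Tendsto (fun n => U.starProjection (e n)) atTop (𝓝 0) := by
  rw [(stdOrthonormalBasis ℂ U).starProjection_eq_sum_rankOne]
  simpa using tendsto_finsetSum Finset.univ fun i _ =>
    (he.tendsto_inner_right _).smul_const ((stdOrthonormalBasis ℂ U i : U) : H)

lemma exists_unit_mem_orthogonal_near {T : H →L[ℂ] H} {a : ℂ} (ha : a ∈ essNumRange T)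
    (U : Submodule ℂ H) [FiniteDimensional ℂ U] {ε : ℝ} (hε : 0 < ε) :
    ∃ v ∈ Uᗮ, ‖v‖ = 1 ∧ ‖⟪v, T v⟫_ℂ - a‖ < ε := by
  obtain ⟨e, he, hlim⟩ := ha
  set x : ℕ → H := fun n => e n - U.starProjection (e n)
  have hP := (he.tendsto_starProjection U).norm
  rw [norm_zero] at hP
  have hx : Tendsto (fun n => ‖x n‖) atTop (𝓝 1) := by
    refine tendsto_iff_norm_sub_tendsto_zero.2 (squeeze_zero (fun _ => norm_nonneg _)
      (fun n => ?_) hP)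
    calc ‖‖x n‖ - 1‖ = |‖x n‖ - ‖e n‖| := by rw [he.1 n, Real.norm_eq_abs]
      _ ≤ ‖x n - e n‖ := abs_norm_sub_norm_le _ _
      _ = ‖U.starProjection (e n)‖ := by rw [sub_sub_cancel_left, norm_neg]
  have hqx : Tendsto (fun n => ⟪x n, T (x n)⟫_ℂ) atTop (𝓝 a) := by
    have hbound : Tendsto (fun n => ‖T‖ * (‖x n‖ + 1) * ‖U.starProjection (e n)‖) atTop (𝓝 0) := by
      simpa using ((hx.add_const 1).const_mul ‖T‖).mul hP
    have hdiff : Tendsto (fun n => ⟪x n, T (x n)⟫_ℂ - ⟪e n, T (e n)⟫_ℂ) atTop (𝓝 0) := by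
      refine squeeze_zero_norm (fun n => ?_) hbound
      have := norm_inner_map_self_sub_le T (x n) (e n)
      rwa [he.1 n, sub_sub_cancel_left, norm_neg] at this
    simpa using hdiff.add hlim
  have hq : Tendsto (fun n => ⟪(‖x n‖ : ℂ)⁻¹ • x n, T ((‖x n‖ : ℂ)⁻¹ • x n)⟫_ℂ)
      atTop (𝓝 a) := by
    simp only [inner_map_self_smul, Complex.norm_real, norm_inv, norm_norm]
    simpa using ((((hx.inv₀ one_ne_zero).pow 2).ofReal).mul hqx)
  obtain ⟨n, hn0, hnε⟩ :=
    ((hx.eventually_ne one_ne_zero).and (Metric.tendsto_nhds.1 hq ε hε)).exists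
  refine ⟨(‖x n‖ : ℂ)⁻¹ • x n, Uᗮ.smul_mem _ (U.sub_starProjection_mem_orthogonal _),
    norm_smul_inv_norm (norm_ne_zero_iff.1 hn0), by rwa [dist_eq_norm] at hnε⟩

lemma Submodule.mem_orthogonal_span_iff {s : Set H} {x : H} :
    x ∈ (Submodule.span ℂ s)ᗮ ↔ ∀ y ∈ s, ⟪y, x⟫_ℂ = 0 :=
  ⟨fun hx _ hy => Submodule.inner_right_of_mem_orthogonal (Submodule.subset_span hy) hx,
    fun h => (Submodule.isOrtho_span (s := {x}) (t := s)).2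
      (fun _ hx' _ hy => hx' ▸ inner_eq_zero_symm.1 (h _ hy)) (Submodule.mem_span_singleton_self x)⟩

lemma norm_ofReal_smul_add_ofReal_smul {x y : H} (hx : ‖x‖ = 1) (hy : ‖y‖ = 1)
    (hxy : ⟪x, y⟫_ℂ = 0) {a b : ℝ} (hab : a ^ 2 + b ^ 2 = 1) :
    ‖(a : ℂ) • x + (b : ℂ) • y‖ = 1 := by
  have h := norm_add_sq_eq_norm_sq_add_norm_sq_of_inner_eq_zero ((a : ℂ) • x) ((b : ℂ) • y)
    (by rw [inner_smul_left, inner_smul_right, hxy, mul_zero, mul_zero])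
  rw [norm_smul, norm_smul, hx, hy, Complex.norm_real, Complex.norm_real, Real.norm_eq_abs,
    Real.norm_eq_abs, mul_one, mul_one, abs_mul_abs_self, abs_mul_abs_self, ← sq, ← sq, ← sq,
    hab] at h
  exact (pow_eq_one_iff_of_nonneg (norm_nonneg _) two_ne_zero).1 h

lemma inner_map_self_ofReal_smul_add (T : H →L[ℂ] H) {x y : H} (hxy : ⟪x, T y⟫_ℂ = 0)
    (hyx : ⟪y, T x⟫_ℂ = 0) (a b : ℝ) :
    ⟪(a : ℂ) • x + (b : ℂ) • y, T ((a : ℂ) • x + (b : ℂ) • y)⟫_ℂ =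
      (a ^ 2 : ℝ) * ⟪x, T x⟫_ℂ + (b ^ 2 : ℝ) * ⟪y, T y⟫_ℂ := by
  simp only [map_add, map_smul, inner_add_left, inner_add_right, inner_smul_left,
    inner_smul_right, hxy, hyx, Complex.conj_ofReal]
  push_cast
  ring

/-- Intermediate value theorem along the quarter circle `θ ↦ cos θ • x + sin θ • y`. -/
lemma exists_re_inner_map_self_eq (T : H →L[ℂ] H) {x y : H} {β : ℝ}
    (hx : (⟪x, T x⟫_ℂ).re ≤ β) (hy : β ≤ (⟪y, T y⟫_ℂ).re) :
    ∃ a b : ℝ, a ^ 2 + b ^ 2 = 1 ∧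
      (⟪(a : ℂ) • x + (b : ℂ) • y, T ((a : ℂ) • x + (b : ℂ) • y)⟫_ℂ).re = β := by
  set φ : ℝ → ℝ := fun θ => (⟪(Real.cos θ : ℂ) • x + (Real.sin θ : ℂ) • y,
      T ((Real.cos θ : ℂ) • x + (Real.sin θ : ℂ) • y)⟫_ℂ).re
  have hφ : Continuous φ := by fun_prop
  obtain ⟨θ, -, hθ⟩ := intermediate_value_Icc (by positivity : (0 : ℝ) ≤ Real.pi / 2)
    hφ.continuousOn (show β ∈ Set.Icc (φ 0) (φ (Real.pi / 2)) by simpa [φ] using ⟨hx, hy⟩)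
  exact ⟨Real.cos θ, Real.sin θ, by rw [add_comm, Real.sin_sq_add_cos_sq], hθ⟩

end InnerMapSelf

section DiagonalValues

variable {H : Type*} [NormedAddCommGroup H] [InnerProductSpace ℂ H] [CompleteSpace H]
  {T : H →L[ℂ] H}

lemma IsSelfAdjoint.inner_map_left (hT : IsSelfAdjoint T) (x y : H) :
    ⟪T x, y⟫_ℂ = ⟪x, T y⟫_ℂ :=
  hT.isSymmetric x y

lemma IsSelfAdjoint.inner_map_self_eq_re (hT : IsSelfAdjoint T) (x : H) :
    ⟪x, T x⟫_ℂ = ((⟪x, T x⟫_ℂ).re : ℂ) :=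
  (hT.isSymmetric.coe_re_inner_self_apply x).symm

lemma exists_unit_mem_orthogonal_inner_map_self_eq (hT : IsSelfAdjoint T) {a b β : ℝ}
    (ha : (a : ℂ) ∈ essNumRange T) (hb : (b : ℂ) ∈ essNumRange T) (haβ : a < β) (hβb : β < b)
    (U : Submodule ℂ H) [FiniteDimensional ℂ U] :
    ∃ v ∈ Uᗮ, ‖v‖ = 1 ∧ ⟪v, T v⟫_ℂ = β := by
  have hre {v : H} {z : ℝ} {ε : ℝ} (h : ‖⟪v, T v⟫_ℂ - z‖ < ε) : |(⟪v, T v⟫_ℂ).re - z| < ε := by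
    simpa using (Complex.abs_re_le_norm _).trans_lt h
  obtain ⟨v₁, hv₁U, hv₁, hv₁a⟩ := exists_unit_mem_orthogonal_near ha U (sub_pos.2 haβ)
  obtain ⟨v₂, hv₂U, hv₂, hv₂b⟩ := exists_unit_mem_orthogonal_near hb (U ⊔ ℂ ∙ v₁) (sub_pos.2 hβb)
  obtain ⟨x, y, hxy, hβ⟩ := exists_re_inner_map_self_eq T (x := v₁) (y := v₂) (β := β)
    (by linarith [abs_lt.1 (hre hv₁a)]) (by linarith [abs_lt.1 (hre hv₂b)])
  refine ⟨(x : ℂ) • v₁ + (y : ℂ) • v₂, add_mem (Uᗮ.smul_mem _ hv₁U)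
      (Uᗮ.smul_mem _ (Submodule.orthogonal_le le_sup_left hv₂U)),
    norm_ofReal_smul_add_ofReal_smul hv₁ hv₂ ((U ⊔ ℂ ∙ v₁).inner_right_of_mem_orthogonal
      (Submodule.mem_sup_right (Submodule.mem_span_singleton_self v₁)) hv₂U) hxy, ?_⟩
  rw [hT.inner_map_self_eq_re, hβ]

/-- `u = t • w + √(1 - t²) • v`, where `v ⊥ w, T w` is a unit vector whose diagonal value `β`
makes the two contributions average to `μ`. -/
lemma exists_unit_inner_map_self_eq_of_unit (hT : IsSelfAdjoint T) {μ ρ : ℝ}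
    (h₁ : ((μ - ρ : ℝ) : ℂ) ∈ essNumRange T) (h₂ : ((μ + ρ : ℝ) : ℂ) ∈ essNumRange T)
    (U : Submodule ℂ H) [FiniteDimensional ℂ U] {w : H} (hwU : w ∈ Uᗮ) (hw : ‖w‖ = 1)
    {t : ℝ} (ht : t ^ 2 ≤ 1 / 2) (htρ : 4 * t ^ 2 * ‖T‖ < ρ) :
    ∃ u ∈ Uᗮ, ‖u‖ = 1 ∧ ⟪u, T u⟫_ℂ = μ ∧ ⟪w, u⟫_ℂ = t := by
  set α := (⟪w, T w⟫_ℂ).re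
  set β := (μ - t ^ 2 * α) / (1 - t ^ 2)
  have ht₁ : 0 < 1 - t ^ 2 := by linarith
  have hβμ : (1 - t ^ 2) * β = μ - t ^ 2 * α := mul_div_cancel₀ _ ht₁.ne'
  have hβ : |β - μ| < ρ := by
    have hα : |α| ≤ ‖T‖ := (Complex.abs_re_le_norm _).trans (norm_inner_map_self_le T hw)
    have hμ₁ := norm_le_of_mem_essNumRange h₁
    have hμ₂ := norm_le_of_mem_essNumRange h₂
    rw [Complex.norm_real, Real.norm_eq_abs] at hμ₁ hμ₂
    have hμα : |μ - α| ≤ 2 * ‖T‖ := by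
      rw [abs_le] at hα hμ₁ hμ₂ ⊢; constructor <;> linarith
    have key := congrArg abs
      (show (1 - t ^ 2) * (β - μ) = t ^ 2 * (μ - α) by linear_combination hβμ)
    rw [abs_mul, abs_mul, abs_of_pos ht₁, abs_of_nonneg (sq_nonneg t)] at key
    nlinarith [mul_le_mul_of_nonneg_left hμα (sq_nonneg t), abs_nonneg (β - μ)]
  set U' := U ⊔ ℂ ∙ w ⊔ ℂ ∙ T w
  obtain ⟨v, hvU', hv, hvβ⟩ := exists_unit_mem_orthogonal_inner_map_self_eq (β := β) hT h₁ h₂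
    (by linarith [abs_lt.1 hβ]) (by linarith [abs_lt.1 hβ]) U'
  have hwv : ⟪w, v⟫_ℂ = 0 := U'.inner_right_of_mem_orthogonal
    (Submodule.mem_sup_left (Submodule.mem_sup_right (Submodule.mem_span_singleton_self w))) hvU'
  have hTwv : ⟪T w, v⟫_ℂ = 0 := U'.inner_right_of_mem_orthogonal
    (Submodule.mem_sup_right (Submodule.mem_span_singleton_self (T w))) hvU'
  have hs : √(1 - t ^ 2) ^ 2 = 1 - t ^ 2 := Real.sq_sqrt ht₁.le
  refine ⟨(t : ℂ) • w + (√(1 - t ^ 2) : ℂ) • v, add_mem (Uᗮ.smul_mem _ hwU)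
      (Uᗮ.smul_mem _ (Submodule.orthogonal_le (le_sup_left.trans le_sup_left) hvU')),
    norm_ofReal_smul_add_ofReal_smul hw hv hwv (by rw [hs]; ring), ?_, ?_⟩
  · rw [inner_map_self_ofReal_smul_add T (by rw [← hT.inner_map_left]; exact hTwv)
      (inner_eq_zero_symm.1 hTwv), hT.inner_map_self_eq_re w, hvβ, hs]
    have := congrArg (fun r : ℝ => (r : ℂ)) hβμ
    push_cast at this ⊢
    linear_combination this
  · rw [inner_add_right, inner_smul_right, inner_smul_right, hwv, inner_self_eq_norm_sq_to_K, hw]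
    simp

lemma exists_unit_inner_map_self_eq (hT : IsSelfAdjoint T) {μ ρ : ℝ}
    (h₁ : ((μ - ρ : ℝ) : ℂ) ∈ essNumRange T) (h₂ : ((μ + ρ : ℝ) : ℂ) ∈ essNumRange T)
    (U : Submodule ℂ H) [FiniteDimensional ℂ U] {g : H} (hgU : g ∈ Uᗮ)
    {t : ℝ} (ht : t ^ 2 ≤ 1 / 2) (htρ : 4 * t ^ 2 * ‖T‖ < ρ) :
    ∃ u ∈ Uᗮ, ‖u‖ = 1 ∧ ⟪u, T u⟫_ℂ = μ ∧ ⟪g, u⟫_ℂ = t * ‖g‖ := by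
  obtain ⟨w, hwU, hw, hgw⟩ : ∃ w ∈ Uᗮ, ‖w‖ = 1 ∧ g = (‖g‖ : ℂ) • w := by
    by_cases hg : g = 0
    · obtain ⟨w, hwU, hw, -⟩ := exists_unit_mem_orthogonal_near h₁ U one_pos
      exact ⟨w, hwU, hw, by simp [hg]⟩
    · refine ⟨(‖g‖ : ℂ)⁻¹ • g, Uᗮ.smul_mem _ hgU, norm_smul_inv_norm hg, ?_⟩
      rw [smul_smul, mul_inv_cancel₀ (by simpa using hg), one_smul]
  obtain ⟨u, huU, hu, huμ, hwu⟩ :=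
    exists_unit_inner_map_self_eq_of_unit hT h₁ h₂ U hwU hw ht htρ
  refine ⟨u, huU, hu, huμ, ?_⟩
  conv_lhs => rw [hgw]
  rw [inner_smul_left, hwu, Complex.conj_ofReal, mul_comm]

end DiagonalValues

section Residual

variable {H : Type*} [NormedAddCommGroup H] [InnerProductSpace ℂ H]

noncomputable def orthoResidual (f : H) (p : ℕ → H) (n : ℕ) : H :=
  f - ∑ j ∈ Finset.range n, ⟪p j, f⟫_ℂ • p j

lemma orthoResidual_congr {f : H} {p q : ℕ → H} {n : ℕ} (h : ∀ m < n, p m = q m) :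
    orthoResidual f p n = orthoResidual f q n := by
  unfold orthoResidual
  congr 1
  exact Finset.sum_congr rfl fun j hj => by rw [h j (Finset.mem_range.1 hj)]

lemma orthoResidual_succ {f : H} {p : ℕ → H} {n : ℕ} (h : ⟪p n, f⟫_ℂ = 0) :
    orthoResidual f p (n + 1) = orthoResidual f p n := by
  simp only [orthoResidual, Finset.sum_range_succ, h, zero_smul, add_zero]

lemma orthoResidual_eq_of_le {f : H} {p : ℕ → H} {m n : ℕ} (hmn : m ≤ n)
    (h : ∀ i, m ≤ i → i < n → ⟪p i, f⟫_ℂ = 0) : orthoResidual f p n = orthoResidual f p m := by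
  induction n, hmn using Nat.le_induction with
  | base => rfl
  | succ n hmn ih =>
    rw [orthoResidual_succ (h n hmn n.lt_succ_self),
      ih fun i hi hin => h i hi (hin.trans n.lt_succ_self)]

lemma inner_orthoResidual_left {f x : H} {p : ℕ → H} {n : ℕ} (hx : ∀ j < n, ⟪p j, x⟫_ℂ = 0) :
    ⟪orthoResidual f p n, x⟫_ℂ = ⟪f, x⟫_ℂ := by
  rw [orthoResidual, inner_sub_left, sum_inner, Finset.sum_eq_zero fun j hj => by
    rw [inner_smul_left, hx j (Finset.mem_range.1 hj), mul_zero], sub_zero]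

lemma inner_orthoResidual_right {f : H} {p : ℕ → H} {n j : ℕ} (hj : j < n) (hpj : ‖p j‖ = 1)
    (horth : ∀ i < n, i ≠ j → ⟪p j, p i⟫_ℂ = 0) : ⟪p j, orthoResidual f p n⟫_ℂ = 0 := by
  rw [orthoResidual, inner_sub_right, inner_sum, Finset.sum_eq_single j
    (fun i hi hij => by rw [inner_smul_right, horth i (Finset.mem_range.1 hi) hij, mul_zero])
    (fun h => absurd (Finset.mem_range.2 hj) h), inner_smul_right,
    inner_self_eq_norm_sq_to_K, hpj]
  simp

end Residual

section Construction

variable {H : Type*} [NormedAddCommGroup H] [InnerProductSpace ℂ H]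
  (T : H →L[ℂ] H) (lam : ℕ → ℝ) (f : ℕ → H) {K : ℕ} (σ : BandSchedule K) (t : ℕ → ℝ)

/-- The conditions on the `n`-th vector `x` of the basis; of the earlier vectors `p`, only
`p j` with `j < n` matter. -/
structure IsBandStep (p : ℕ → H) (n : ℕ) (x : H) : Prop where
  norm_eq_one : ‖x‖ = 1
  inner_prev : ∀ j < n, ⟪p j, x⟫_ℂ = 0
  inner_map_prev : ∀ j < n, n ≤ j + K → ⟪T (p j), x⟫_ℂ = 0
  inner_map_self : ⟪x, T x⟫_ℂ = lam n
  of_not_capture : n ∉ σ.capture →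
    ⟪x, f (σ.key n)⟫_ℂ = 0 ∧ ⟪T (orthoResidual (f (σ.key n)) p n), x⟫_ℂ = 0
  of_capture : n ∈ σ.capture →
    ⟪orthoResidual (f (σ.key n)) p n, x⟫_ℂ = t n * ‖orthoResidual (f (σ.key n)) p n‖

def bandConstraints (K : ℕ) (p : ℕ → H) (n : ℕ) : Set H :=
  p '' Set.Iio n ∪ (fun j => T (p j)) '' Set.Ico (n - K) n

variable {T lam f σ t}

lemma IsBandStep.congr {p q : ℕ → H} {n : ℕ} {x : H} (h : ∀ m < n, p m = q m)
    (hx : IsBandStep T lam f σ t p n x) : IsBandStep T lam f σ t q n x where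
  norm_eq_one := hx.norm_eq_one
  inner_prev j hj := h j hj ▸ hx.inner_prev j hj
  inner_map_prev j hj := h j hj ▸ hx.inner_map_prev j hj
  inner_map_self := hx.inner_map_self
  of_not_capture := orthoResidual_congr h ▸ hx.of_not_capture
  of_capture := orthoResidual_congr h ▸ hx.of_capture

lemma bandConstraints_finite (p : ℕ → H) (n : ℕ) : (bandConstraints T K p n).Finite :=
  ((Set.finite_Iio n).image p).union ((Set.finite_Ico _ _).image _)

lemma mem_orthogonal_span_bandConstraints_iff {p : ℕ → H} {n : ℕ} {x : H} :
    x ∈ (Submodule.span ℂ (bandConstraints T K p n))ᗮ ↔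
      (∀ j < n, ⟪p j, x⟫_ℂ = 0) ∧ ∀ j < n, n ≤ j + K → ⟪T (p j), x⟫_ℂ = 0 := by
  simp only [Submodule.mem_orthogonal_span_iff, bandConstraints, Set.mem_union, or_imp,
    forall_and, Set.forall_mem_image, Set.mem_Iio, Set.mem_Ico]
  exact and_congr Iff.rfl ⟨fun h j hj hjK => h ⟨by omega, hj⟩, fun h j hj => h j hj.2 (by omega)⟩

/-- The `K` steps before a capture step leave the residual unchanged and make `T` of it
orthogonal to their vectors. -/
lemma orthoResidual_mem_orthogonal_span_bandConstraints [CompleteSpace H] (hT : IsSelfAdjoint T)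
    {p : ℕ → H} {n : ℕ} (hp : ∀ m < n, IsBandStep T lam f σ t p m (p m)) (hc : n ∈ σ.capture) :
    orthoResidual (f (σ.key n)) p n ∈ (Submodule.span ℂ (bandConstraints T K p n))ᗮ := by
  refine mem_orthogonal_span_bandConstraints_iff.2 ⟨fun j hj => ?_, fun j hj hjK => ?_⟩
  · exact inner_orthoResidual_right hj (hp j hj).norm_eq_one fun i hi hij =>
      hij.lt_or_gt.elim (fun hij => inner_eq_zero_symm.1 ((hp j hj).inner_prev i hij))
        fun hij => (hp i hi).inner_prev j hij
  · have hwin (i : ℕ) (hji : j ≤ i) (hi : i < n) := σ.window n hc i hi (by omega)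
    rw [orthoResidual_eq_of_le hj.le fun i hji hi => by
        rw [← (hwin i hji hi).2]
        exact ((hp i hi).of_not_capture (hwin i hji hi).1).1,
      hT.inner_map_left, ← inner_conj_symm, ← (hwin j le_rfl hj).2,
      ((hp j hj).of_not_capture (hwin j le_rfl hj).1).2, map_zero]

lemma exists_isBandStep [CompleteSpace H] (hT : IsSelfAdjoint T) {p : ℕ → H} {n : ℕ}
    (hp : ∀ m < n, IsBandStep T lam f σ t p m (p m)) {ρ : ℝ}
    (h₁ : ((lam n - ρ : ℝ) : ℂ) ∈ essNumRange T) (h₂ : ((lam n + ρ : ℝ) : ℂ) ∈ essNumRange T)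
    (ht : t n ^ 2 ≤ 1 / 2) (htρ : 4 * t n ^ 2 * ‖T‖ < ρ) :
    ∃ x, IsBandStep T lam f σ t p n x := by
  set g := orthoResidual (f (σ.key n)) p n
  set U := Submodule.span ℂ (bandConstraints T K p n)
  have : FiniteDimensional ℂ U := FiniteDimensional.span_of_finite ℂ (bandConstraints_finite p n)
  by_cases hc : n ∈ σ.capture
  · obtain ⟨u, huU, hu, huμ, hgu⟩ := exists_unit_inner_map_self_eq hT h₁ h₂ U
      (orthoResidual_mem_orthogonal_span_bandConstraints hT hp hc) ht htρ
    have hband := mem_orthogonal_span_bandConstraints_iff.1 huU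
    exact ⟨u, hu, hband.1, hband.2, huμ, fun h => absurd hc h, fun _ => hgu⟩
  · set U' := U ⊔ ℂ ∙ f (σ.key n) ⊔ ℂ ∙ T g
    obtain ⟨u, huU', hu, huμ, -⟩ :=
      exists_unit_inner_map_self_eq hT h₁ h₂ U' (Submodule.zero_mem _) ht htρ
    have hband := mem_orthogonal_span_bandConstraints_iff.1
      (Submodule.orthogonal_le (le_sup_left.trans le_sup_left) huU')
    refine ⟨u, hu, hband.1, hband.2, huμ, fun _ => ⟨?_, ?_⟩, fun h => absurd h hc⟩
    · exact U'.inner_left_of_mem_orthogonal (Submodule.mem_sup_left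
        (Submodule.mem_sup_right (Submodule.mem_span_singleton_self _))) huU'
    · exact U'.inner_right_of_mem_orthogonal
        (Submodule.mem_sup_right (Submodule.mem_span_singleton_self _)) huU'

end Construction

section Basis

variable {H : Type*} [NormedAddCommGroup H] [InnerProductSpace ℂ H]
  {T : H →L[ℂ] H} {lam : ℕ → ℝ} {f : ℕ → H} {K : ℕ} {σ : BandSchedule K} {t : ℕ → ℝ}
  {u : ℕ → H}

lemma IsBandStep.orthonormal (hu : ∀ n, IsBandStep T lam f σ t u n (u n)) :
    Orthonormal ℂ u := by
  rw [orthonormal_iff_ite]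
  intro i j
  rcases lt_trichotomy i j with h | rfl | h
  · rw [if_neg h.ne, (hu j).inner_prev i h]
  · rw [if_pos rfl, inner_self_eq_norm_sq_to_K, (hu i).norm_eq_one]
    simp
  · rw [if_neg h.ne', inner_eq_zero_symm.1 ((hu i).inner_prev j h)]

lemma IsBandStep.inner_map_eq_zero [CompleteSpace H] (hT : IsSelfAdjoint T)
    (hu : ∀ n, IsBandStep T lam f σ t u n (u n)) {n j : ℕ} (h₁ : 1 ≤ |(n : ℤ) - (j : ℤ)|)
    (h₂ : |(n : ℤ) - (j : ℤ)| ≤ (K : ℤ)) : ⟪u j, T (u n)⟫_ℂ = 0 := by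
  rw [abs_le] at h₂
  rcases lt_or_gt_of_ne (show n ≠ j by rintro rfl; simp at h₁) with h | h
  · exact inner_eq_zero_symm.1 ((hu j).inner_map_prev n h (by omega))
  · rw [← hT.inner_map_left]
    exact (hu n).inner_map_prev j h (by omega)

lemma IsBandStep.mem_closure_span (hu : ∀ n, IsBandStep T lam f σ t u n (u n))
    (hfib : ∀ k, ¬ Summable ((σ.capture ∩ σ.key ⁻¹' {k}).indicator fun n => t n ^ 2)) (k : ℕ) :
    f k ∈ closure (Submodule.span ℂ (Set.range u) : Set H) := by
  rw [Metric.mem_closure_iff]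
  by_contra! hfar
  obtain ⟨ε, hε, hfar⟩ := hfar
  have hres (n : ℕ) : ε ≤ ‖orthoResidual (f k) u n‖ := by
    refine (hfar (∑ j ∈ Finset.range n, ⟪u j, f k⟫_ℂ • u j) (Submodule.sum_mem _ fun j _ =>
      Submodule.smul_mem _ _ (Submodule.subset_span ⟨j, rfl⟩))).trans_eq ?_
    rw [dist_eq_norm, orthoResidual]
  -- at a capture step for `f k`, the coefficient of `f k` along `u n` is at least `t n * ε`
  refine hfib k (((IsBandStep.orthonormal hu).inner_products_summable (f k)).div_const (ε ^ 2)
    |>.of_nonneg_of_le (Set.indicator_nonneg fun n _ => sq_nonneg _) fun n => ?_)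
  by_cases hn : n ∈ σ.capture ∩ σ.key ⁻¹' {k}
  · have hcoef := (hu n).of_capture hn.1
    rw [inner_orthoResidual_left (hu n).inner_prev, show σ.key n = k from hn.2] at hcoef
    rw [Set.indicator_of_mem hn, le_div_iff₀ (pow_pos hε 2), norm_inner_symm, hcoef,
      norm_mul, Complex.norm_real, Complex.norm_real, norm_norm, Real.norm_eq_abs, mul_pow, sq_abs]
    gcongr
    exact hres n
  · rw [Set.indicator_of_notMem hn]
    positivity

end Basis

theorem exists_isONBasis_band {H : Type*} [NormedAddCommGroup H] [InnerProductSpace ℂ H]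
    [CompleteSpace H] [TopologicalSpace.SeparableSpace H] {T : H →L[ℂ] H} (hT : IsSelfAdjoint T)
    {lam ρ : ℕ → ℝ} (hρ : ∀ n, 0 < ρ n) (hmem : ∀ n, ((lam n - ρ n : ℝ) : ℂ) ∈ essNumRange T ∧
      ((lam n + ρ n : ℝ) : ℂ) ∈ essNumRange T) (hdiv : ¬ Summable ρ) (K : ℕ) :
    ∃ u : ℕ → H, IsONBasis u ∧ (∀ n, ⟪u n, T (u n)⟫_ℂ = (lam n : ℂ)) ∧
      ∀ n j : ℕ, 1 ≤ |(n : ℤ) - (j : ℤ)| → |(n : ℤ) - (j : ℤ)| ≤ (K : ℤ) →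
        ⟪u j, T (u n)⟫_ℂ = 0 := by
  set τ : ℕ → ℝ := fun n => min (ρ n / (4 * (‖T‖ + 1))) (1 / 2)
  have hτ : 0 ≤ τ := fun n => le_min (div_nonneg (hρ n).le (by positivity)) (by norm_num)
  obtain ⟨σ, hσ⟩ := BandSchedule.exists_not_summable hτ
    (not_summable_min_div (fun n => (hρ n).le) hdiv (by positivity) one_half_pos) K
  obtain ⟨f, hf⟩ := TopologicalSpace.exists_dense_seq H
  set t : ℕ → ℝ := fun n => √(τ n)
  have ht (n : ℕ) : t n ^ 2 = τ n := Real.sq_sqrt (hτ n)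
  have htρ (n : ℕ) : 4 * t n ^ 2 * ‖T‖ < ρ n := by
    have hc : 0 < 4 * (ρ n / (4 * (‖T‖ + 1))) := by have := hρ n; positivity
    rw [ht]
    calc 4 * τ n * ‖T‖ ≤ 4 * (ρ n / (4 * (‖T‖ + 1))) * ‖T‖ := by
          gcongr
          exact min_le_left _ _
      _ < 4 * (ρ n / (4 * (‖T‖ + 1))) * (‖T‖ + 1) := by gcongr; exact lt_add_one _
      _ = ρ n := by field_simp
  obtain ⟨u, hu⟩ := exists_seq_of_forall_exists_next (IsBandStep T lam f σ t)
    (fun p q n x h hx => hx.congr h) fun p n hp => exists_isBandStep hT hp (hmem n).1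
      (hmem n).2 ((ht n).trans_le (min_le_right _ _)) (htρ n)
  have hdense : Dense (Submodule.span ℂ (Set.range u) : Set H) := dense_closure.1 <|
    hf.mono <| Set.range_subset_iff.2 <|
      IsBandStep.mem_closure_span hu fun k => by simpa [ht] using hσ k
  exact ⟨u, ⟨IsBandStep.orthonormal hu, Submodule.dense_iff_topologicalClosure_eq_top.1 hdense⟩,
    fun n => (hu n).inner_map_self, fun n j => IsBandStep.inner_map_eq_zero hT hu⟩

lemma Metric.ball_infDist_frontier_subset_interior {E : Type*} [NormedAddCommGroup E]
    [NormedSpace ℝ E] {S : Set E} {x : E} (hx : x ∈ interior S) :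
    Metric.ball x (Metric.infDist x (frontier S)) ⊆ interior S := by
  rcases le_or_gt (Metric.infDist x (frontier S)) 0 with hd | hd
  · simp [Metric.ball_eq_empty.2 hd]
  refine (convex_ball x _).isPreconnected.subset_of_closure_inter_subset isOpen_interior
    ⟨x, Metric.mem_ball_self hd, hx⟩ fun y ⟨hyc, hyb⟩ => by_contra fun hyi => ?_
  have hyf : y ∈ frontier S := ⟨closure_mono interior_subset hyc, hyi⟩
  exact (Metric.infDist_le_dist_of_mem hyf).not_gt (by rwa [Metric.mem_ball, dist_comm] at hyb)

lemma exists_pos_sub_mem_add_mem {S : Set ℝ} {x : ℝ} (hx : x ∈ interior S) :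
    ∃ ρ > 0, Metric.infDist x (frontier S) / 2 ≤ ρ ∧ x - ρ ∈ S ∧ x + ρ ∈ S := by
  obtain ⟨ε, hε, hεS⟩ := Metric.isOpen_iff.1 isOpen_interior x hx
  set d := Metric.infDist x (frontier S)
  have hball : Metric.ball x (max d ε) ⊆ S := by
    rcases le_total d ε with h | h
    · rw [max_eq_right h]; exact hεS.trans interior_subset
    · rw [max_eq_left h]
      exact (Metric.ball_infDist_frontier_subset_interior hx).trans interior_subset
  have hρ : 0 < max d ε := lt_max_of_lt_right hε
  refine ⟨max d ε / 2, half_pos hρ, by gcongr; exact le_max_left _ _, hball ?_, hball ?_⟩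
  · rw [Metric.mem_ball, Real.dist_eq, sub_sub_cancel_left, abs_neg, abs_of_pos (half_pos hρ)]
    exact half_lt_self hρ
  · rw [Metric.mem_ball, Real.dist_eq, add_sub_cancel_left, abs_of_pos (half_pos hρ)]
    exact half_lt_self hρ

theorem stmt13_general {H : Type*} [NormedAddCommGroup H] [InnerProductSpace ℂ H] [CompleteSpace H]
    [TopologicalSpace.SeparableSpace H]
    (T : H →L[ℂ] H) (hsa : IsSelfAdjoint T)
    (lam : ℕ → ℝ)
    (hlam : ∀ n, lam n ∈ interior {t : ℝ | (t : ℂ) ∈ essNumRange T})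
    (hdiv : ¬ Summable
      (fun n => Metric.infDist (lam n) (frontier {t : ℝ | (t : ℂ) ∈ essNumRange T})))
    (K : ℕ) :
    ∃ u : ℕ → H, IsONBasis u ∧ (∀ n, ⟪u n, T (u n)⟫_ℂ = (lam n : ℂ)) ∧
      ∀ n j : ℕ, 1 ≤ |(n : ℤ) - (j : ℤ)| → |(n : ℤ) - (j : ℤ)| ≤ (K : ℤ) →
        ⟪u j, T (u n)⟫_ℂ = 0 := by
  choose ρ hρ hdρ hmem using fun n => exists_pos_sub_mem_add_mem (hlam n)
  refine exists_isONBasis_band hsa hρ hmem (fun hs => hdiv ?_) K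
  exact (hs.mul_left 2).of_nonneg_of_le (fun n => Metric.infDist_nonneg)
    fun n => by linarith [hdρ n]

theorem stmt13 {H : Type*} [NormedAddCommGroup H] [InnerProductSpace ℂ H] [CompleteSpace H]
    [TopologicalSpace.SeparableSpace H] (hinf : ¬ FiniteDimensional ℂ H)
    (T : H →L[ℂ] H) (hsa : IsSelfAdjoint T)
    (lam : ℕ → ℝ)
    (hlam : ∀ n, lam n ∈ interior {t : ℝ | (t : ℂ) ∈ essNumRange T})
    (hdiv : ¬ Summable
      (fun n => Metric.infDist (lam n) (frontier {t : ℝ | (t : ℂ) ∈ essNumRange T})))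
    (K : ℕ) :
    ∃ u : ℕ → H, IsONBasis u ∧ (∀ n, ⟪u n, T (u n)⟫_ℂ = (lam n : ℂ)) ∧
      ∀ n j : ℕ, 1 ≤ |(n : ℤ) - (j : ℤ)| → |(n : ℤ) - (j : ℤ)| ≤ (K : ℤ) →
        ⟪u j, T (u n)⟫_ℂ = 0 :=
  stmt13_general T hsa lam hlam hdiv K
end
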